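/- arXiv:0801.2322 — 2 statements merged into one kernel-verified Lean document; each statement's English description precedes it below -/
import Mathlib

section
/- If X/Γ is a simply laced quotient and the quotient graph X/Γ is connected, then all vertex orbits of Γ acting on X have the same cardinality. -/
attribute [local instance] Classical.propDecidable


/-- The quotient of a graph `X` by the action of a group `Γ`: vertices are the
orbits, with distinct orbits adjacent iff they contain adjacent representatives. -/
def quotGraph {V : Type*} (X : SimpleGraph V) (Γ : Type*) [Group Γ] [MulAction Γ V] :
    SimpleGraph (Quotient (MulAction.orbitRel Γ V)) where
  Adj U W := U ≠ W ∧ ∃ u w : V, Quotient.mk (MulAction.orbitRel Γ V) u = U ∧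
      Quotient.mk (MulAction.orbitRel Γ V) w = W ∧ X.Adj u w
  symm := by
    refine ⟨?_⟩
    rintro U W ⟨hne, u, w, hu, hw, h⟩
    exact ⟨hne.symm, w, u, hw, hu, h.symm⟩
  loopless := by
    refine ⟨?_⟩
    rintro U ⟨hne, -⟩
    exact hne rfl

/-- The quotient `X/Γ` is simply laced: no edge of `X` joins two vertices of a single
orbit, and no vertex of `X` has two distinct neighbors in the same orbit. -/
def SimplyLaced {V : Type*} (X : SimpleGraph V) (Γ : Type*) [Group Γ] [MulAction Γ V] : Prop :=
  (∀ u v : V, X.Adj u v →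
      Quotient.mk (MulAction.orbitRel Γ V) u ≠ Quotient.mk (MulAction.orbitRel Γ V) v) ∧
  (∀ u v w : V, X.Adj u v → X.Adj u w →
      Quotient.mk (MulAction.orbitRel Γ V) v = Quotient.mk (MulAction.orbitRel Γ V) w → v = w)

/-! If orbits `U` and `W` are adjacent in `X/Γ`, then, `Γ` being transitive on `U`, every
vertex of `U` has a neighbour in `W`, and by simple lacing no vertex of `W` has two neighbours
in `U`. Hence `|U| ≤ |W|`, and symmetrically `|W| ≤ |U|`; connectedness of `X/Γ` propagates
the equality along walks. -/

open Finset

section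

variable {V : Type*} {X : SimpleGraph V} {Γ : Type*} [Group Γ] [MulAction Γ V]

lemma exists_adj_mk_eq_of_quotGraph_adj
    (hAut : ∀ (g : Γ) (u v : V), X.Adj u v → X.Adj (g • u) (g • v))
    {U W : Quotient (MulAction.orbitRel Γ V)} (h : (quotGraph X Γ).Adj U W)
    {v : V} (hv : Quotient.mk _ v = U) : ∃ w, Quotient.mk _ w = W ∧ X.Adj v w := by
  obtain ⟨-, u, w, rfl, rfl, huw⟩ := h
  obtain ⟨g, rfl⟩ := Quotient.exact hv
  exact ⟨g • w, Quotient.sound ⟨g, rfl⟩, hAut g u w huw⟩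

namespace SimplyLaced

variable [Fintype V]

lemma card_le_of_quotGraph_adj (hSL : SimplyLaced X Γ)
    (hAut : ∀ (g : Γ) (u v : V), X.Adj u v → X.Adj (g • u) (g • v))
    {U W : Quotient (MulAction.orbitRel Γ V)} (h : (quotGraph X Γ).Adj U W) :
    #{v : V | Quotient.mk _ v = U} ≤ #{v : V | Quotient.mk _ v = W} := by
  refine card_le_card_of_forall_subsingleton X.Adj (fun v hv => ?_)
    (fun w _ u₁ ⟨hu₁, hu₁w⟩ u₂ ⟨hu₂, hu₂w⟩ => ?_)
  · simpa using exists_adj_mk_eq_of_quotGraph_adj hAut h (mem_filter.1 hv).2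
  · exact hSL.2 w u₁ u₂ hu₁w.symm hu₂w.symm
      ((mem_filter.1 hu₁).2.trans (mem_filter.1 hu₂).2.symm)

lemma card_eq_of_quotGraph_adj (hSL : SimplyLaced X Γ)
    (hAut : ∀ (g : Γ) (u v : V), X.Adj u v → X.Adj (g • u) (g • v))
    {U W : Quotient (MulAction.orbitRel Γ V)} (h : (quotGraph X Γ).Adj U W) :
    #{v : V | Quotient.mk _ v = U} = #{v : V | Quotient.mk _ v = W} :=
  (hSL.card_le_of_quotGraph_adj hAut h).antisymm (hSL.card_le_of_quotGraph_adj hAut h.symm)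

end SimplyLaced

end

theorem quotGraph_orbits_card_eq_of_connected_general
    {V : Type*} [Fintype V]
    (X : SimpleGraph V) (Γ : Type*) [Group Γ] [MulAction Γ V]
    (hAut : ∀ (g : Γ) (u v : V), X.Adj u v ↔ X.Adj (g • u) (g • v))
    (hSL : SimplyLaced X Γ)
    (hconn : (quotGraph X Γ).Connected) :
    ∀ U W : Quotient (MulAction.orbitRel Γ V),
      (Finset.univ.filter
          (fun v : V => Quotient.mk (MulAction.orbitRel Γ V) v = U)).card =
      (Finset.univ.filter
          (fun v : V => Quotient.mk (MulAction.orbitRel Γ V) v = W)).card := by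
  intro U W
  obtain ⟨p⟩ := hconn.preconnected U W
  induction p with
  | nil => rfl
  | cons h _ ih => exact (hSL.card_eq_of_quotGraph_adj (fun g u v => (hAut g u v).1) h).trans ih

/-- If the quotient `X/Γ` is simply laced and connected, then all
vertex orbits have the same cardinality. -/
theorem quotGraph_orbits_card_eq_of_connected
    {V : Type*} [Fintype V] [DecidableEq V]
    (X : SimpleGraph V) (Γ : Type*) [Group Γ] [MulAction Γ V]
    (hAut : ∀ (g : Γ) (u v : V), X.Adj u v ↔ X.Adj (g • u) (g • v))
    (hSL : SimplyLaced X Γ)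
    (hconn : (quotGraph X Γ).Connected) :
    ∀ U W : Quotient (MulAction.orbitRel Γ V),
      (Finset.univ.filter
          (fun v : V => Quotient.mk (MulAction.orbitRel Γ V) v = U)).card =
      (Finset.univ.filter
          (fun v : V => Quotient.mk (MulAction.orbitRel Γ V) v = W)).card :=
  quotGraph_orbits_card_eq_of_connected_general X Γ hAut hSL hconn
end

section
/- Let G and H be n-vertex graphs such that the 2k-dimensional Weisfeiler-Lehman algorithm does not distinguish G from H (their WL color multisets agree in every round). Then the k-th powers G^k and H^k are cospectral. -/
/-!
A `2k`-tuple `Fin.append x y` of vertices of `G` is an ordered pair `(x, y)` of vertices of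
`G^k`. By induction on `r`, its round-`r` Weisfeiler-Lehman color determines whether `x = y`
and the number of length-`r` walks from `x` to `y` in `G^k`: a step of such a walk replaces one
coordinate `x u` by a `G`-neighbour `v`, which is what substituting `v` at position `u` in the
refinement sees. Summing over all `2k`-tuples, the color multiset of round `r` determines
`trace (A^r)` for the adjacency matrix `A` of `G^k`. For a symmetric real matrix these traces are
the power sums of the eigenvalues, and by Newton's identities the power sums determine the
characteristic polynomial.
-/

attribute [local instance] Classical.propDecidable

/-- The type of "types" (isomorphism types) of k-tuples: the pattern of equalities
and of adjacencies among the entries. -/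
def Tp (k : ℕ) : Type := (Fin k → Fin k → Prop) × (Fin k → Fin k → Prop)

/-- The type `tp` of a k-tuple of vertices: which entries are equal and which are
adjacent. Two tuples are equivalent iff they have the same `tp`. -/
def tp {V : Type*} (G : SimpleGraph V) {k : ℕ} (x : Fin k → V) : Tp k :=
  (fun a b => x a = x b, fun a b => G.Adj (x a) (x b))

/-- The type of colors used at round `r+1` of the k-dimensional Weisfeiler-Lehman
refinement (round indexing starts at `0` here, corresponding to round `1` of the
usual presentation). -/
def WLColor (k : ℕ) : ℕ → Type
  | 0 => Tp k
  | r + 1 => Multiset (Tp (k + 1) × (Fin k → WLColor k r))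

/-- The k-dimensional Weisfeiler-Lehman coloring of k-tuples: round `0` is the type
`tp`, and round `r+1` attaches to a tuple the multiset, over all vertices `m`, of the
type of the extended `(k+1)`-tuple together with the round-`r` colors of the tuples
obtained by substituting `m` into each of the `k` positions. -/
def WL {V : Type*} [Fintype V] (G : SimpleGraph V) (k : ℕ) :
    (r : ℕ) → (Fin k → V) → WLColor k r
  | 0, x => tp G x
  | r + 1, x =>
      Finset.univ.val.map fun m : V =>
        (tp G (Fin.snoc x m), fun t => WL G k r (Function.update x t m))

/-- The k-th power of a graph: vertices are k-tuples, two tuples adjacent iff they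
agree in all but one coordinate, at which the entries are adjacent in `G`. -/
def graphPow {V : Type*} (G : SimpleGraph V) (k : ℕ) : SimpleGraph (Fin k → V) where
  Adj x y := ∃ u, G.Adj (x u) (y u) ∧ ∀ l, l ≠ u → x l = y l
  symm := by
    constructor
    rintro x y ⟨u, h, he⟩
    exact ⟨u, h.symm, fun l hl => (he l hl).symm⟩
  loopless := by
    constructor
    rintro x ⟨u, h, -⟩
    exact G.loopless.irrefl _ h

open Finset Polynomial

theorem mul_esymm_map_univ_eq_sum {K σ : Type*} [CommRing K] [Fintype σ] (γ : σ → K) (j : ℕ) :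
    (j : K) * (univ.val.map γ).esymm j =
      (-1) ^ (j + 1) * ∑ a ∈ antidiagonal j with a.1 < j,
        (-1) ^ a.1 * (univ.val.map γ).esymm a.1 * ∑ i, γ i ^ a.2 := by
  have := congrArg (MvPolynomial.aeval γ) (MvPolynomial.mul_esymm_eq_sum σ K j)
  simpa only [map_mul, map_sum, map_pow, map_neg, map_one, map_natCast, MvPolynomial.psum,
    MvPolynomial.aeval_X, MvPolynomial.aeval_esymm_eq_multiset_esymm] using this

theorem esymm_map_univ_eq_of_sum_pow_eq {K ι ι' : Type*} [Field K] [CharZero K]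
    [Fintype ι] [Fintype ι'] {α : ι → K} {β : ι' → K}
    (h : ∀ m, ∑ i, α i ^ m = ∑ i, β i ^ m) (j : ℕ) :
    (univ.val.map α).esymm j = (univ.val.map β).esymm j := by
  induction j using Nat.strong_induction_on with
  | _ j ih =>
    rcases Nat.eq_zero_or_pos j with rfl | hj
    · simp [Multiset.esymm]
    refine mul_left_cancel₀ (Nat.cast_ne_zero.mpr hj.ne') ?_
    rw [mul_esymm_map_univ_eq_sum α, mul_esymm_map_univ_eq_sum β]
    refine congrArg _ (sum_congr rfl fun a ha => ?_)
    rw [ih a.1 (mem_filter.mp ha).2, h]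

theorem prod_X_sub_C_eq_of_sum_pow_eq {K ι ι' : Type*} [Field K] [CharZero K]
    [Fintype ι] [Fintype ι'] {α : ι → K} {β : ι' → K}
    (h : ∀ m, ∑ i, α i ^ m = ∑ i, β i ^ m) :
    ∏ i, (X - C (α i)) = ∏ i, (X - C (β i)) := by
  have hcard : Fintype.card ι = Fintype.card ι' := by exact_mod_cast (by simpa using h 0)
  have hα : ∏ i, (X - C (α i)) = ((univ.val.map α).map fun t => X - C t).prod := by
    rw [Multiset.map_map, prod_map_val]; rfl
  have hβ : ∏ i, (X - C (β i)) = ((univ.val.map β).map fun t => X - C t).prod := by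
    rw [Multiset.map_map, prod_map_val]; rfl
  rw [hα, hβ, Multiset.prod_X_sub_X_eq_sum_esymm,
    Multiset.prod_X_sub_X_eq_sum_esymm]
  simp only [Multiset.card_map, card_val, card_univ, hcard, esymm_map_univ_eq_of_sum_pow_eq h]

theorem Matrix.IsHermitian.trace_pow {𝕜 n : Type*} [RCLike 𝕜] [Fintype n] [DecidableEq n]
    {A : Matrix n n 𝕜} (hA : A.IsHermitian) (m : ℕ) :
    (A ^ m).trace = ∑ i, (hA.eigenvalues i : 𝕜) ^ m := by
  conv_lhs => rw [hA.spectral_theorem, ← map_pow, Unitary.conjStarAlgAut_apply,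
    Matrix.trace_mul_cycle, Unitary.coe_star_mul_self, Matrix.one_mul, Matrix.diagonal_pow,
    Matrix.trace_diagonal]
  rfl

theorem Matrix.IsHermitian.charpoly_eq_of_trace_pow_eq {𝕜 n n' : Type*} [RCLike 𝕜]
    [Fintype n] [DecidableEq n] [Fintype n'] [DecidableEq n']
    {A : Matrix n n 𝕜} {B : Matrix n' n' 𝕜} (hA : A.IsHermitian) (hB : B.IsHermitian)
    (h : ∀ m, (A ^ m).trace = (B ^ m).trace) :
    A.charpoly = B.charpoly := by
  rw [hA.charpoly_eq, hB.charpoly_eq]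
  exact prod_X_sub_C_eq_of_sum_pow_eq fun m => by rw [← hA.trace_pow, ← hB.trace_pow, h]

theorem Fin.append_update_castAdd {α : Type*} {m n : ℕ} (x : Fin m → α) (y : Fin n → α)
    (u : Fin m) (v : α) :
    Function.update (Fin.append x y) (Fin.castAdd n u) v = Fin.append (Function.update x u v) y := by
  ext i
  refine Fin.addCases (fun j => ?_) (fun j => ?_) i
  · simp [Function.update_apply, Fin.castAdd_inj]
  · have hne : Fin.natAdd m j ≠ Fin.castAdd n u := fun h => by
      have := congrArg Fin.val h
      simp only [Fin.val_natAdd, Fin.val_castAdd] at this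
      omega
    simp [Function.update_of_ne hne]

theorem graphPow_adj_iff_exists_update {V : Type*} (G : SimpleGraph V) (k : ℕ)
    (x y : Fin k → V) :
    (graphPow G k).Adj x y ↔ ∃ u v, G.Adj (x u) v ∧ Function.update x u v = y := by
  constructor
  · rintro ⟨u, hadj, heq⟩
    refine ⟨u, y u, hadj, funext fun l => ?_⟩
    by_cases hl : l = u
    · simp [hl]
    · simp [Function.update_of_ne hl, heq l hl]
  · rintro ⟨u, v, hadj, rfl⟩
    exact ⟨u, by simpa using hadj, fun l hl => (Function.update_of_ne hl _ _).symm⟩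

theorem sum_adjMatrix_graphPow_mul {V R : Type*} [Fintype V] [NonAssocSemiring R]
    (G : SimpleGraph V) (k : ℕ) (x : Fin k → V) (P : (Fin k → V) → R) :
    ∑ w, (graphPow G k).adjMatrix R x w * P w =
      ∑ u : Fin k, ∑ v : V, if G.Adj (x u) v then P (Function.update x u v) else 0 := by
  have hinj : Set.InjOn (fun p : Fin k × V => Function.update x p.1 p.2)
      {p | G.Adj (x p.1) p.2} := by
    rintro ⟨u, v⟩ huv ⟨u', v'⟩ - heq
    have hu : u = u' := by
      by_contra hne
      have hv : v = x u := by simpa [Function.update_of_ne hne] using congrFun heq u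
      exact G.loopless.irrefl _ (hv ▸ huv)
    subst hu
    simpa using congrFun heq u
  have himage : univ.filter ((graphPow G k).Adj x) =
      (univ.filter fun p : Fin k × V => G.Adj (x p.1) p.2).image
        fun p => Function.update x p.1 p.2 := by
    ext w
    simp [graphPow_adj_iff_exists_update]
  calc ∑ w, (graphPow G k).adjMatrix R x w * P w
      = ∑ w ∈ univ.filter ((graphPow G k).Adj x), P w := by
        simp [SimpleGraph.adjMatrix_apply, sum_filter]
    _ = ∑ p ∈ univ.filter fun p : Fin k × V => G.Adj (x p.1) p.2,
          P (Function.update x p.1 p.2) := by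
        rw [himage, sum_image (by simpa using hinj)]
    _ = _ := by rw [sum_filter, Fintype.sum_prod_type]

section WalkCount

variable (R : Type*) [Semiring R] (k : ℕ)

/- Evaluated at the color of `Fin.append x y`: at round `m + 1` the entry `e` coming from a vertex
`v` has `e.1.2 (castSucc (castAdd k u)) (last _) ↔ G.Adj (x u) v`, and `e.2 (castAdd k u)` is the
round-`m` color of `Fin.append (update x u v) y`. -/
noncomputable def walkCount : (m : ℕ) → WLColor (k + k) m → R
  | 0, c => if ∀ i : Fin k, c.1 (Fin.castAdd k i) (Fin.natAdd k i) then 1 else 0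
  | m + 1, c => (Multiset.map (fun e : Tp (k + k + 1) × (Fin (k + k) → WLColor (k + k) m) =>
      ∑ u : Fin k, if e.1.2 (Fin.castSucc (Fin.castAdd k u)) (Fin.last (k + k))
        then walkCount m (e.2 (Fin.castAdd k u)) else 0) c).sum

def IsDiagColor : (m : ℕ) → WLColor (k + k) m → Prop
  | 0, c => ∀ i : Fin k, c.1 (Fin.castAdd k i) (Fin.natAdd k i)
  | m + 1, c => ∀ e ∈ (show Multiset (Tp (k + k + 1) × (Fin (k + k) → WLColor (k + k) m)) from c),
      ∀ i : Fin k, e.1.1 (Fin.castSucc (Fin.castAdd k i)) (Fin.castSucc (Fin.natAdd k i))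

noncomputable def closedWalkCount (m : ℕ) (c : WLColor (k + k) m) : R :=
  if IsDiagColor k m c then walkCount R k m c else 0

variable {R k}
variable {V : Type*} [Fintype V] (G : SimpleGraph V)

theorem isDiagColor_WL_append_iff (m : ℕ) (x y : Fin k → V) :
    IsDiagColor k m (WL G (k + k) m (Fin.append x y)) ↔ x = y := by
  cases m with
  | zero => simp only [IsDiagColor, WL, tp, Fin.append_left, Fin.append_right, funext_iff]
  | succ m =>
    simp only [IsDiagColor, WL, Multiset.mem_map, mem_val, mem_univ, true_and,
      forall_exists_index, forall_apply_eq_imp_iff, tp, Fin.snoc_castSucc, Fin.append_left,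
      Fin.append_right]
    exact ⟨fun h => funext fun i => h (x i) i, fun h _ i => congrFun h i⟩

variable [DecidableEq V]

theorem walkCount_WL_append (m : ℕ) (x y : Fin k → V) :
    walkCount R k m (WL G (k + k) m (Fin.append x y)) = ((graphPow G k).adjMatrix R ^ m) x y := by
  induction m generalizing x with
  | zero =>
    simp only [walkCount, WL, tp, Fin.append_left, Fin.append_right, pow_zero, Matrix.one_apply,
      funext_iff]
  | succ m ih =>
    simp only [walkCount, WL, Multiset.map_map, Function.comp_def, sum_map_val, tp,
      Fin.snoc_castSucc, Fin.snoc_last, Fin.append_left, Fin.append_update_castAdd, ih]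
    rw [sum_comm, pow_succ', Matrix.mul_apply, sum_adjMatrix_graphPow_mul]

theorem trace_adjMatrix_graphPow_pow (m : ℕ) :
    ((graphPow G k).adjMatrix R ^ m).trace =
      ((univ.val.map fun z : Fin (k + k) → V => WL G (k + k) m z).map
        (closedWalkCount R k m)).sum := by
  calc ((graphPow G k).adjMatrix R ^ m).trace
      = ∑ x : Fin k → V, ∑ y : Fin k → V,
          if x = y then ((graphPow G k).adjMatrix R ^ m) x y else 0 := by
        simp [Matrix.trace]
    _ = ∑ x : Fin k → V, ∑ y : Fin k → V,
          closedWalkCount R k m (WL G (k + k) m (Fin.append x y)) := by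
        simp only [closedWalkCount, walkCount_WL_append, isDiagColor_WL_append_iff]
    _ = ∑ z : Fin (k + k) → V, closedWalkCount R k m (WL G (k + k) m z) := by
        rw [← Fintype.sum_prod_type', ← (Fin.appendEquiv k k).sum_comp]
        rfl
    _ = _ := by rw [Multiset.map_map, Function.comp_def, sum_map_val]

end WalkCount

theorem graphPow_cospectral_of_WL2k_multisets_eq_general
    {V V' : Type*} [Fintype V] [Fintype V'] [DecidableEq V] [DecidableEq V']
    (G : SimpleGraph V) (H : SimpleGraph V') (k : ℕ)
    (h : ∀ r : ℕ,
      (Finset.univ.val.map fun x : Fin (k + k) → V => WL G (k + k) r x) =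
      (Finset.univ.val.map fun x : Fin (k + k) → V' => WL H (k + k) r x)) :
    ((graphPow G k).adjMatrix ℝ).charpoly = ((graphPow H k).adjMatrix ℝ).charpoly := by
  refine ((graphPow G k).isHermitian_adjMatrix ℝ).charpoly_eq_of_trace_pow_eq
    ((graphPow H k).isHermitian_adjMatrix ℝ) fun m => ?_
  rw [trace_adjMatrix_graphPow_pow, trace_adjMatrix_graphPow_pow, h m]

/-- If the 2k-dimensional Weisfeiler-Lehman algorithm does not
distinguish `G` from `H` (the multisets of colors of all 2k-tuples agree in every
round), then the k-th powers `G^k` and `H^k` are cospectral. -/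
theorem graphPow_cospectral_of_WL2k_multisets_eq
    {V V' : Type*} [Fintype V] [Fintype V'] [DecidableEq V] [DecidableEq V']
    (G : SimpleGraph V) (H : SimpleGraph V') (k : ℕ)
    (hcard : Fintype.card V = Fintype.card V')
    (h : ∀ r : ℕ,
      (Finset.univ.val.map fun x : Fin (k + k) → V => WL G (k + k) r x) =
      (Finset.univ.val.map fun x : Fin (k + k) → V' => WL H (k + k) r x)) :
    ((graphPow G k).adjMatrix ℝ).charpoly = ((graphPow H k).adjMatrix ℝ).charpoly :=
  graphPow_cospectral_of_WL2k_multisets_eq_general G H k h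
end
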